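/- arXiv:2002.10629 — 4 statements merged into one kernel-verified Lean document; each statement's English description precedes it below -/
import Mathlib

section
/- Let f : ℝⁿ × ℝᵐ → ℝ be differentiable with L-Lipschitz gradient (L > 0) and bounded below by a constant J_c. Consider exact alternating minimization iterates (x_k, y_k). Then for every positive integer K, min_{0 ≤ k ≤ K} ‖∇f(x_k, y_k)‖² ≤ 2L·(f(x₀, y₀) − J_c)/K; in particular the process converges to a stationary point with non-asymptotic sublinear rate O(1/√K). -/
/-!
With an `L`-Lipschitz gradient, a gradient step of length `1/L` decreases `f` by at least
`‖∇f‖² / (2L)`. At an iterate `(x k, y k)` the `y`-block of the gradient vanishes, because `y k`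
minimizes `f (x k, ·)`; so this gradient step only moves `x` and is a competitor in the exact
`x`-minimization. Hence each sweep of alternating minimization decreases `f` by at least
`‖∇f (x k, y k)‖² / (2L)`, and telescoping against the lower bound `Jc` bounds the smallest of the
first `K` squared gradient norms by `2L (f (x 0, y 0) - Jc) / K`.
-/

/-- Pairing of the two blocks of variables into the (L²) product space ℝⁿ × ℝᵐ. -/
noncomputable def pairL2 {n m : ℕ} (x : EuclideanSpace ℝ (Fin n)) (y : EuclideanSpace ℝ (Fin m)) :
    WithLp 2 (EuclideanSpace ℝ (Fin n) × EuclideanSpace ℝ (Fin m)) :=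
  (WithLp.equiv 2 _).symm (x, y)

section

variable {E F : Type*} [NormedAddCommGroup E] [InnerProductSpace ℝ E] [CompleteSpace E]
  [NormedAddCommGroup F] [InnerProductSpace ℝ F] [CompleteSpace F]

theorem hasDerivAt_comp_add_smul {f : E → ℝ} {p v : E} {t : ℝ}
    (hf : DifferentiableAt ℝ f (p + t • v)) :
    HasDerivAt (fun s : ℝ => f (p + s • v)) (inner ℝ (gradient f (p + t • v)) v) t := by
  have hline : HasDerivAt (fun s : ℝ => p + s • v) v t := by
    simpa using ((hasDerivAt_id t).smul_const v).const_add p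
  exact hf.hasGradientAt.hasFDerivAt.comp_hasDerivAt t hline

theorem le_add_inner_gradient_add_sq {f : E → ℝ} {L : ℝ} (hf : Differentiable ℝ f)
    (hlip : ∀ p q, ‖gradient f p - gradient f q‖ ≤ L * ‖p - q‖) (p v : E) :
    f (p + v) ≤ f p + inner ℝ (gradient f p) v + L / 2 * ‖v‖ ^ 2 := by
  set g : ℝ → ℝ := fun t => f (p + t • v) - t * inner ℝ (gradient f p) v - L / 2 * t ^ 2 * ‖v‖ ^ 2
  have hg : ∀ t, HasDerivAt g
      (inner ℝ (gradient f (p + t • v) - gradient f p) v - L * t * ‖v‖ ^ 2) t := by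
    intro t
    refine (((hasDerivAt_comp_add_smul (hf _)).sub ((hasDerivAt_id t).mul_const
      (inner ℝ (gradient f p) v))).sub (((hasDerivAt_pow 2 t).const_mul (L / 2)).mul_const
      (‖v‖ ^ 2))).congr_deriv ?_
    rw [inner_sub_left]; push_cast; ring
  have hanti : AntitoneOn g (Set.Ici 0) := by
    refine antitoneOn_of_hasDerivWithinAt_nonpos (convex_Ici 0)
      (fun t _ => (hg t).continuousAt.continuousWithinAt) (fun t _ => (hg t).hasDerivWithinAt) ?_
    intro t ht
    rw [interior_Ici, Set.mem_Ioi] at ht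
    calc inner ℝ (gradient f (p + t • v) - gradient f p) v - L * t * ‖v‖ ^ 2
        ≤ ‖gradient f (p + t • v) - gradient f p‖ * ‖v‖ - L * t * ‖v‖ ^ 2 := by
          gcongr; exact real_inner_le_norm _ _
      _ ≤ L * ‖(p + t • v) - p‖ * ‖v‖ - L * t * ‖v‖ ^ 2 := by
          gcongr; exact hlip _ _
      _ = 0 := by
          rw [add_sub_cancel_left, norm_smul, Real.norm_of_nonneg ht.le]; ring
  have hg_one_le := hanti (Set.mem_Ici.2 le_rfl) (Set.mem_Ici.2 zero_le_one) zero_le_one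
  simp only [g, one_smul, zero_smul, add_zero] at hg_one_le
  linarith

theorem le_sub_sq_norm_gradient_div {f : E → ℝ} {L : ℝ} (hL : 0 < L) (hf : Differentiable ℝ f)
    (hlip : ∀ p q, ‖gradient f p - gradient f q‖ ≤ L * ‖p - q‖) (p : E) :
    f (p - L⁻¹ • gradient f p) ≤ f p - ‖gradient f p‖ ^ 2 / (2 * L) := by
  have h := le_add_inner_gradient_add_sq hf hlip p (-(L⁻¹ • gradient f p))
  rw [← sub_eq_add_neg, inner_neg_right, real_inner_smul_right, real_inner_self_eq_norm_sq,
    norm_neg, norm_smul, Real.norm_of_nonneg (inv_nonneg.2 hL.le)] at h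
  have hL' : L ≠ 0 := hL.ne'
  calc _ ≤ _ := h
    _ = _ := by field_simp; ring

open WithLp

theorem snd_gradient_eq_zero_of_forall_le {f : WithLp 2 (E × F) → ℝ} {a : E} {b : F}
    (hf : DifferentiableAt ℝ f (toLp 2 (a, b)))
    (hmin : ∀ y, f (toLp 2 (a, b)) ≤ f (toLp 2 (a, y))) :
    (gradient f (toLp 2 (a, b))).snd = 0 := by
  set G := gradient f (toLp 2 (a, b))
  set w : WithLp 2 (E × F) := toLp 2 (0, G.snd)
  have hline : ∀ t : ℝ, toLp 2 (a, b) + t • w = toLp 2 (a, b + t • G.snd) := by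
    intro t; simp [w, ← toLp_smul, ← toLp_add]
  have hloc : IsLocalMin (fun t : ℝ => f (toLp 2 (a, b) + t • w)) 0 :=
    Filter.Eventually.of_forall fun t => by simpa only [zero_smul, add_zero, hline] using hmin _
  have hderiv := hloc.hasDerivAt_eq_zero (hasDerivAt_comp_add_smul (by simpa using hf))
  rw [zero_smul, add_zero] at hderiv
  change inner ℝ G.fst 0 + inner ℝ G.snd G.snd = (0 : ℝ) at hderiv
  rwa [inner_zero_right, zero_add, inner_self_eq_zero] at hderiv

theorem sq_norm_gradient_le_of_alternating_step {f : WithLp 2 (E × F) → ℝ} {L : ℝ} (hL : 0 < L)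
    (hf : Differentiable ℝ f) (hlip : ∀ p q, ‖gradient f p - gradient f q‖ ≤ L * ‖p - q‖)
    {a a' : E} {b b' : F} (hb : ∀ y, f (toLp 2 (a, b)) ≤ f (toLp 2 (a, y)))
    (ha' : ∀ x, f (toLp 2 (a', b)) ≤ f (toLp 2 (x, b)))
    (hb' : f (toLp 2 (a', b')) ≤ f (toLp 2 (a', b))) :
    ‖gradient f (toLp 2 (a, b))‖ ^ 2 ≤ 2 * L * (f (toLp 2 (a, b)) - f (toLp 2 (a', b'))) := by
  set G := gradient f (toLp 2 (a, b))
  have hG : G.snd = 0 := snd_gradient_eq_zero_of_forall_le (hf _) hb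
  have hstep : toLp 2 (a, b) - L⁻¹ • G = toLp 2 (a - L⁻¹ • G.fst, b) :=
    ofLp_injective 2 (Prod.ext rfl (by simp [hG]))
  have hdecrease : f (toLp 2 (a', b')) ≤ f (toLp 2 (a, b)) - ‖G‖ ^ 2 / (2 * L) :=
    calc f (toLp 2 (a', b')) ≤ f (toLp 2 (a - L⁻¹ • G.fst, b)) := hb'.trans (ha' _)
      _ = f (toLp 2 (a, b) - L⁻¹ • G) := by rw [hstep]
      _ ≤ _ := le_sub_sq_norm_gradient_div hL hf hlip _
  exact (div_le_iff₀' (by positivity)).1 (by linarith)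

end

theorem exists_lt_le_mul_div_of_le_mul_sub {a g : ℕ → ℝ} {c J : ℝ} (hc : 0 ≤ c)
    (hg : ∀ k, g k ≤ c * (a k - a (k + 1))) (hJ : ∀ k, J ≤ a k) {K : ℕ} (hK : 0 < K) :
    ∃ k < K, g k ≤ c * (a 0 - J) / K := by
  have hsum : ∑ k ∈ Finset.range K, g k ≤ ∑ _k ∈ Finset.range K, c * (a 0 - J) / K :=
    calc ∑ k ∈ Finset.range K, g k ≤ ∑ k ∈ Finset.range K, c * (a k - a (k + 1)) :=
          Finset.sum_le_sum fun k _ => hg k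
      _ = c * (a 0 - a K) := by rw [← Finset.mul_sum, Finset.sum_range_sub']
      _ ≤ c * (a 0 - J) := by gcongr; exact hJ K
      _ = _ := by
          rw [Finset.sum_const, Finset.card_range, nsmul_eq_mul]
          field_simp
  obtain ⟨k, hk, hle⟩ := Finset.exists_le_of_sum_le (Finset.nonempty_range_iff.2 hK.ne') hsum
  exact ⟨k, Finset.mem_range.1 hk, hle⟩

/-- **Theorem 1 (global convergence of exact alternating minimization).**
If `f : ℝⁿ × ℝᵐ → ℝ` is differentiable with `L`-Lipschitz gradient (`L > 0`) and bounded
below by `Jc`, and `(x k, y k)` are exact alternating minimization iterates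
(`y 0 ∈ argmin_y f (x 0, y)`, `x (k+1) ∈ argmin_x f (x, y k)`,
`y (k+1) ∈ argmin_y f (x (k+1), y)`), then for every positive `K`,
`min_{0 ≤ k ≤ K} ‖∇f(x k, y k)‖² ≤ 2 L (f (x 0, y 0) − Jc) / K`. -/
theorem am_global_convergence_rate
    (n m : ℕ) (L : ℝ) (hL : 0 < L) (Jc : ℝ)
    (f : WithLp 2 (EuclideanSpace ℝ (Fin n) × EuclideanSpace ℝ (Fin m)) → ℝ)
    (hdiff : Differentiable ℝ f)
    (hlip : ∀ p q, ‖gradient f p - gradient f q‖ ≤ L * ‖p - q‖)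
    (hbdd : ∀ p, Jc ≤ f p)
    (x : ℕ → EuclideanSpace ℝ (Fin n)) (y : ℕ → EuclideanSpace ℝ (Fin m))
    (hy0 : ∀ y', f (pairL2 (x 0) (y 0)) ≤ f (pairL2 (x 0) y'))
    (hx : ∀ k : ℕ, ∀ x', f (pairL2 (x (k + 1)) (y k)) ≤ f (pairL2 x' (y k)))
    (hy : ∀ k : ℕ, ∀ y', f (pairL2 (x (k + 1)) (y (k + 1))) ≤ f (pairL2 (x (k + 1)) y')) :
    ∀ K : ℕ, 0 < K →
      ∃ k ≤ K, ‖gradient f (pairL2 (x k) (y k))‖ ^ 2 ≤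
        2 * L * (f (pairL2 (x 0) (y 0)) - Jc) / K := by
  intro K hK
  have hmin_y : ∀ k y', f (pairL2 (x k) (y k)) ≤ f (pairL2 (x k) y')
    | 0 => hy0
    | k + 1 => hy k
  have hdescent : ∀ k, ‖gradient f (pairL2 (x k) (y k))‖ ^ 2 ≤
      2 * L * (f (pairL2 (x k) (y k)) - f (pairL2 (x (k + 1)) (y (k + 1)))) := fun k =>
    sq_norm_gradient_le_of_alternating_step hL hdiff hlip (hmin_y k) (hx k) (hy k (y k))
  obtain ⟨k, hk, hle⟩ := exists_lt_le_mul_div_of_le_mul_sub (by positivity) hdescent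
    (fun k => hbdd _) hK
  exact ⟨k, hk.le, hle⟩
end

section
/- Let f : ℝⁿ × ℝᵐ → ℝ be twice continuously differentiable with L-Lipschitz gradient (L > 0). Consider exact alternating minimization iterates (x_k, y_k), and suppose they converge to a point (x̂, ŷ) that is a strict local minimum of f with ∇f(x̂, ŷ) = 0 and positive definite Hessian ∇²f(x̂, ŷ), and that f(x_k, y_k) > f* for all k, where f* = f(x̂, ŷ). Then there exist K_c ∈ ℕ and γ > 0 such that for all K ≥ K_c, f(x_K, y_K) − f* ≤ 1 / ( γ·(K − K_c) + (f(x_{K_c}, y_{K_c}) − f*)⁻¹ ); in particular the objective values converge at rate O(1/K). -/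
open Asymptotics Filter InnerProductSpace Metric Topology

section LipschitzGradient

variable {E : Type*} [NormedAddCommGroup E] [InnerProductSpace ℝ E] [CompleteSpace E]
  {f : E → ℝ} {L : ℝ}

theorem norm_fderiv_eq_norm_gradient (f : E → ℝ) (p : E) : ‖fderiv ℝ f p‖ = ‖gradient f p‖ := by
  rw [← toDual_gradient, LinearIsometryEquiv.norm_map]

theorem le_add_inner_gradient_add_mul_norm_sq (hL : 0 ≤ L) (hf : Differentiable ℝ f)
    (hlip : ∀ p q, ‖gradient f p - gradient f q‖ ≤ L * ‖p - q‖) (p q : E) :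
    f q ≤ f p + ⟪gradient f p, q - p⟫_ℝ + L * ‖q - p‖ ^ 2 := by
  have hbound : ∀ z ∈ closedBall p ‖q - p‖, ‖fderiv ℝ f z - fderiv ℝ f p‖ ≤ L * ‖q - p‖ := by
    intro z hz
    rw [← toDual_gradient, ← toDual_gradient, ← map_sub, LinearIsometryEquiv.norm_map]
    exact (hlip z p).trans (mul_le_mul_of_nonneg_left (mem_closedBall_iff_norm.1 hz) hL)
  have hmv := (convex_closedBall p ‖q - p‖).norm_image_sub_le_of_norm_fderiv_le'
    (fun z _ => hf z) hbound (mem_closedBall_self (norm_nonneg _))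
    (mem_closedBall_iff_norm.2 le_rfl)
  rw [← inner_gradient_left, Real.norm_eq_abs] at hmv
  linarith [le_abs_self (f q - f p - ⟪gradient f p, q - p⟫_ℝ)]

theorem apply_sub_smul_gradient_le (hL : 0 < L) (hf : Differentiable ℝ f)
    (hlip : ∀ p q, ‖gradient f p - gradient f q‖ ≤ L * ‖p - q‖) (p : E) :
    f (p - (2 * L)⁻¹ • gradient f p) ≤ f p - (4 * L)⁻¹ * ‖gradient f p‖ ^ 2 := by
  have h := le_add_inner_gradient_add_mul_norm_sq hL.le hf hlip p (p - (2 * L)⁻¹ • gradient f p)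
  rw [sub_sub_cancel_left, inner_neg_right, real_inner_smul_right, real_inner_self_eq_norm_sq,
    norm_neg, norm_smul, Real.norm_of_nonneg (by positivity)] at h
  calc _ ≤ _ := h
    _ = _ := by field_simp; ring

theorem HasFDerivAt.isBigO_sub_rev {𝕜 F G : Type*} [NontriviallyNormedField 𝕜]
    [NormedAddCommGroup F] [NormedSpace 𝕜 F] [NormedAddCommGroup G] [NormedSpace 𝕜 G]
    {g : F → G} {g' : F →L[𝕜] G} {x : F} {C : NNReal} (h : HasFDerivAt g g' x)
    (hg' : AntilipschitzWith C g') : (fun z ↦ z - x) =O[𝓝 x] fun z ↦ g z - g x := by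
  have A : (fun z ↦ z - x) =O[𝓝 x] fun z ↦ g' (z - x) :=
    isBigO_iff.2 ⟨C, Eventually.of_forall fun z ↦ by simpa using hg'.le_mul_dist (z - x) 0⟩
  have B : (fun z ↦ g z - g x) ~[𝓝 x] fun z ↦ g' (z - x) := h.isLittleO.trans_isBigO A
  exact A.trans B.isBigO_symm

theorem exists_pos_eventually_sub_le_mul_norm_gradient_sq [FiniteDimensional ℝ E] (hL : 0 < L)
    (hf : ContDiff ℝ 2 f) (hlip : ∀ p q, ‖gradient f p - gradient f q‖ ≤ L * ‖p - q‖) {z : E}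
    (hgrad : gradient f z = 0) (hhess : ∀ v, v ≠ 0 → 0 < iteratedFDeriv ℝ 2 f z ![v, v]) :
    ∃ κ > 0, ∀ᶠ u in 𝓝 z, f u - f z ≤ κ * ‖gradient f u‖ ^ 2 := by
  set H := fderiv ℝ (fderiv ℝ f) z
  have hH : HasFDerivAt (fderiv ℝ f) H z :=
    ((hf.fderiv_right le_rfl).differentiable one_ne_zero z).hasFDerivAt
  have hinj : Function.Injective H := by
    refine (injective_iff_map_eq_zero H).2 fun v hv => by_contra fun hv0 => ?_
    have hpos : 0 < H v v := by simpa [iteratedFDeriv_two_apply] using hhess v hv0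
    simp [hv] at hpos
  obtain ⟨C, -, hC⟩ := H.toLinearMap.injective_iff_antilipschitz.1 hinj
  obtain ⟨c, hc, hO⟩ := (hH.isBigO_sub_rev hC).exists_pos
  have hfz : fderiv ℝ f z = 0 := by rw [← toDual_gradient, hgrad, map_zero]
  refine ⟨L * c ^ 2, by positivity, ?_⟩
  filter_upwards [hO.bound] with u hu
  rw [hfz, sub_zero, norm_fderiv_eq_norm_gradient] at hu
  have hd := le_add_inner_gradient_add_mul_norm_sq hL.le (hf.differentiable two_ne_zero) hlip z u
  rw [hgrad, inner_zero_left, add_zero] at hd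
  calc f u - f z ≤ L * ‖u - z‖ ^ 2 := by linarith
    _ ≤ L * (c * ‖gradient f u‖) ^ 2 := by gcongr
    _ = L * c ^ 2 * ‖gradient f u‖ ^ 2 := by ring

end LipschitzGradient

section Product

variable {E F : Type*} [NormedAddCommGroup E] [InnerProductSpace ℝ E] [CompleteSpace E]
  [NormedAddCommGroup F] [InnerProductSpace ℝ F] [CompleteSpace F] {f : WithLp 2 (E × F) → ℝ}

theorem fst_gradient_eq_zero_of_forall_le {p : WithLp 2 (E × F)} (hf : DifferentiableAt ℝ f p)
    (hmin : ∀ x', f p ≤ f (WithLp.toLp 2 (x', p.snd))) : (gradient f p).fst = 0 := by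
  set T : E →L[ℝ] WithLp 2 (E × F) :=
    ((WithLp.prodContinuousLinearEquiv 2 ℝ E F).symm : E × F →L[ℝ] WithLp 2 (E × F)).comp
      (ContinuousLinearMap.inl ℝ E F)
  have hT : HasFDerivAt (fun x' => WithLp.toLp 2 (x', p.snd)) T p.fst :=
    (WithLp.prodContinuousLinearEquiv 2 ℝ E F).symm.hasFDerivAt.comp _
      (hasFDerivAt_prodMk_left p.fst p.snd)
  have hcrit : (fderiv ℝ f p).comp T = 0 :=
    IsLocalMin.hasFDerivAt_eq_zero (Eventually.of_forall hmin) (hf.hasFDerivAt.comp _ hT)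
  have h := DFunLike.congr_fun hcrit (gradient f p).fst
  simpa [T, ← inner_gradient_left] using h

theorem le_sub_mul_norm_gradient_sq_of_block_min {L : ℝ} (hL : 0 < L) (hf : Differentiable ℝ f)
    (hlip : ∀ p q, ‖gradient f p - gradient f q‖ ≤ L * ‖p - q‖) {p q : WithLp 2 (E × F)}
    (hfst : ∀ x', f p ≤ f (WithLp.toLp 2 (x', p.snd)))
    (hsnd : ∀ y', f q ≤ f (WithLp.toLp 2 (p.fst, y'))) :
    f q ≤ f p - (4 * L)⁻¹ * ‖gradient f p‖ ^ 2 := by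
  have hstep : p - (2 * L)⁻¹ • gradient f p =
      WithLp.toLp 2 (p.fst, p.snd - (2 * L)⁻¹ • (gradient f p).snd) := by
    refine WithLp.ofLp_injective 2 (Prod.ext ?_ ?_) <;>
      simp [fst_gradient_eq_zero_of_forall_le (hf p) hfst]
  calc f q ≤ f (p - (2 * L)⁻¹ • gradient f p) := hstep ▸ hsnd _
    _ ≤ _ := apply_sub_smul_gradient_le hL hf hlip p

end Product

theorem le_one_div_of_le_mul_sub {e : ℕ → ℝ} {a : ℝ} {K₀ : ℕ} (ha : 0 < a) (he : ∀ k, 0 < e k)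
    (hrec : ∀ k, K₀ ≤ k → e (k + 1) ≤ a * (e k - e (k + 1))) {K : ℕ} (hK : K₀ ≤ K) :
    e K ≤ 1 / ((a * e K₀)⁻¹ * ((K : ℝ) - K₀) + (e K₀)⁻¹) := by
  have hgeom : ∀ N : ℕ, e (K₀ + N) * (1 + a⁻¹) ^ N ≤ e K₀ := by
    intro N
    induction N with
    | zero => simp
    | succ N ih =>
      have hcontr : e (K₀ + N + 1) * (1 + a⁻¹) ≤ e (K₀ + N) := by
        have := hrec (K₀ + N) (Nat.le_add_right _ _)
        rw [mul_one_add, ← div_eq_mul_inv]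
        linarith [(div_le_iff₀' ha).2 this]
      calc e (K₀ + (N + 1)) * (1 + a⁻¹) ^ (N + 1)
          = e (K₀ + N + 1) * (1 + a⁻¹) * (1 + a⁻¹) ^ N := by rw [← add_assoc, pow_succ]; ring
        _ ≤ e (K₀ + N) * (1 + a⁻¹) ^ N := by gcongr
        _ ≤ e K₀ := ih
  obtain ⟨N, rfl⟩ := Nat.exists_eq_add_of_le hK
  have hbern : 1 + N * a⁻¹ ≤ (1 + a⁻¹) ^ N := one_add_mul_le_pow (by linarith [inv_pos.2 ha]) N
  have hN : e (K₀ + N) * (1 + N * a⁻¹) ≤ e K₀ :=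
    (mul_le_mul_of_nonneg_left hbern (he _).le).trans (hgeom N)
  have he₀ := he K₀
  rw [Nat.cast_add, add_sub_cancel_left, le_div_iff₀ (by positivity)]
  calc e (K₀ + N) * ((a * e K₀)⁻¹ * N + (e K₀)⁻¹) = e (K₀ + N) * (1 + N * a⁻¹) / e K₀ := by
        field_simp; ring
    _ ≤ e K₀ / e K₀ := by gcongr
    _ = 1 := div_self he₀.ne'

theorem am_local_convergence_rate_general
    (n m : ℕ) (L : ℝ) (hL : 0 < L)
    (f : WithLp 2 (EuclideanSpace ℝ (Fin n) × EuclideanSpace ℝ (Fin m)) → ℝ)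
    (hsmooth : ContDiff ℝ 2 f)
    (hlip : ∀ p q, ‖gradient f p - gradient f q‖ ≤ L * ‖p - q‖)
    (x : ℕ → EuclideanSpace ℝ (Fin n)) (y : ℕ → EuclideanSpace ℝ (Fin m))
    (hx : ∀ k : ℕ, ∀ x', f (pairL2 (x (k + 1)) (y k)) ≤ f (pairL2 x' (y k)))
    (hy : ∀ k : ℕ, ∀ y', f (pairL2 (x (k + 1)) (y (k + 1))) ≤ f (pairL2 (x (k + 1)) y'))
    (xhat : EuclideanSpace ℝ (Fin n)) (yhat : EuclideanSpace ℝ (Fin m))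
    (hconv : Filter.Tendsto (fun k => pairL2 (x k) (y k)) Filter.atTop (nhds (pairL2 xhat yhat)))
    (hgrad : gradient f (pairL2 xhat yhat) = 0)
    (hhess : ∀ v, v ≠ 0 → 0 < iteratedFDeriv ℝ 2 f (pairL2 xhat yhat) ![v, v])
    (hgt : ∀ k : ℕ, f (pairL2 xhat yhat) < f (pairL2 (x k) (y k))) :
    ∃ Kc : ℕ, ∃ γ > (0 : ℝ), ∀ K : ℕ, Kc ≤ K →
      f (pairL2 (x K) (y K)) - f (pairL2 xhat yhat) ≤
        1 / (γ * ((K : ℝ) - (Kc : ℝ)) +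
          (f (pairL2 (x Kc) (y Kc)) - f (pairL2 xhat yhat))⁻¹) := by
  set w := fun k => pairL2 (x (k + 1)) (y k)
  set e := fun k => f (pairL2 (x k) (y k)) - f (pairL2 xhat yhat)
  have he : ∀ k, 0 < e k := fun k => sub_pos.2 (hgt k)
  obtain ⟨κ, hκ, hPL⟩ :=
    exists_pos_eventually_sub_le_mul_norm_gradient_sq hL hsmooth hlip hgrad hhess
  have hw : Tendsto w atTop (𝓝 (pairL2 xhat yhat)) := by
    have hfst := (WithLp.continuous_fst 2 _ _ |>.tendsto _).comp
      (hconv.comp (tendsto_add_atTop_nat 1))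
    have hsnd := (WithLp.continuous_snd 2 _ _ |>.tendsto _).comp hconv
    exact (WithLp.prod_continuous_toLp 2 _ _ |>.tendsto _).comp (hfst.prodMk_nhds hsnd)
  obtain ⟨Kc, hKc⟩ := eventually_atTop.1 (hw.eventually hPL)
  have hrec : ∀ k, Kc ≤ k → e (k + 1) ≤ 4 * L * κ * (e k - e (k + 1)) := by
    intro k hk
    have hdesc := le_sub_mul_norm_gradient_sq_of_block_min hL (hsmooth.differentiable two_ne_zero)
      hlip (hx k) (hy k)
    have hgrad_sq : ‖gradient f (w k)‖ ^ 2 ≤ 4 * L * (e k - e (k + 1)) := by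
      refine (inv_mul_le_iff₀ (by positivity)).1 ?_
      linarith [hx k (x k)]
    calc e (k + 1) ≤ f (w k) - f (pairL2 xhat yhat) := sub_le_sub_right (hy k _) _
      _ ≤ κ * ‖gradient f (w k)‖ ^ 2 := hKc k hk
      _ ≤ κ * (4 * L * (e k - e (k + 1))) := by gcongr
      _ = 4 * L * κ * (e k - e (k + 1)) := by ring
  exact ⟨Kc, _, inv_pos.2 (mul_pos (by positivity) (he Kc)),
    fun K hK => le_one_div_of_le_mul_sub (by positivity) he hrec hK⟩

/-- **Theorem 2 (local convergence rate of alternating minimization).**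
Let `f : ℝⁿ × ℝᵐ → ℝ` be C², with `L`-Lipschitz gradient (`L > 0`). Suppose exact
alternating minimization iterates `(x k, y k)` converge to a strict local minimum
`(x̂, ŷ)` with vanishing gradient and positive definite Hessian, and
`f (x k, y k) > f* := f (x̂, ŷ)` for all `k`. Then there exist `Kc ∈ ℕ` and `γ > 0`
such that for all `K ≥ Kc`,
`f (x K, y K) − f* ≤ 1 / (γ (K − Kc) + (f (x Kc, y Kc) − f*)⁻¹)`. -/
theorem am_local_convergence_rate
    (n m : ℕ) (L : ℝ) (hL : 0 < L)
    (f : WithLp 2 (EuclideanSpace ℝ (Fin n) × EuclideanSpace ℝ (Fin m)) → ℝ)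
    (hsmooth : ContDiff ℝ 2 f)
    (hlip : ∀ p q, ‖gradient f p - gradient f q‖ ≤ L * ‖p - q‖)
    (x : ℕ → EuclideanSpace ℝ (Fin n)) (y : ℕ → EuclideanSpace ℝ (Fin m))
    (hy0 : ∀ y', f (pairL2 (x 0) (y 0)) ≤ f (pairL2 (x 0) y'))
    (hx : ∀ k : ℕ, ∀ x', f (pairL2 (x (k + 1)) (y k)) ≤ f (pairL2 x' (y k)))
    (hy : ∀ k : ℕ, ∀ y', f (pairL2 (x (k + 1)) (y (k + 1))) ≤ f (pairL2 (x (k + 1)) y'))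
    (xhat : EuclideanSpace ℝ (Fin n)) (yhat : EuclideanSpace ℝ (Fin m))
    (hconv : Filter.Tendsto (fun k => pairL2 (x k) (y k)) Filter.atTop (nhds (pairL2 xhat yhat)))
    (hstrict : ∃ ε > 0, ∀ z, z ≠ pairL2 xhat yhat → ‖z - pairL2 xhat yhat‖ < ε →
      f (pairL2 xhat yhat) < f z)
    (hgrad : gradient f (pairL2 xhat yhat) = 0)
    (hhess : ∀ v, v ≠ 0 → 0 < iteratedFDeriv ℝ 2 f (pairL2 xhat yhat) ![v, v])
    (hgt : ∀ k : ℕ, f (pairL2 xhat yhat) < f (pairL2 (x k) (y k))) :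
    ∃ Kc : ℕ, ∃ γ > (0 : ℝ), ∀ K : ℕ, Kc ≤ K →
      f (pairL2 (x K) (y K)) - f (pairL2 xhat yhat) ≤
        1 / (γ * ((K : ℝ) - (Kc : ℝ)) +
          (f (pairL2 (x Kc) (y Kc)) - f (pairL2 xhat yhat))⁻¹) :=
  am_local_convergence_rate_general n m L hL f hsmooth hlip x y hx hy xhat yhat hconv hgrad hhess
    hgt
end

section
/- Let S ≥ 1, let E, F, G ∈ ℝ^{S×S} with E diagonal and invertible and G invertible, and let T > 0. Define the 2S × 2S block matrix A(T) with top-left block E, top-right block 0, bottom-left block whose (i,j) entry is F_{ij} T^{j−i}, and bottom-right block whose (i,j) entry is G_{ij} T^{S−i+j} (indices 1 ≤ i, j ≤ S). Set U = E⁻¹, W = G⁻¹, and V = −W F U. Then A(T) is invertible and A(T)⁻¹ is the block matrix with top-left block U, top-right block 0, bottom-left block whose (i,j) entry is V_{ij} T^{j−i−S}, and bottom-right block whose (i,j) entry is W_{ij} T^{j−i−S}. In particular every entry of A(T)⁻¹ is a fixed constant times a power of T. -/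
/-!
Writing `Δ = diag(T⁰, T¹, …, T^{S-1})`, the blocks of `A(T)` are `F(T) = Δ⁻¹ F Δ` and
`G(T) = T^S • Δ⁻¹ G Δ`, while `E` commutes with `Δ`. Hence `A(T)⁻¹` is given by the usual
formula for the inverse of a block lower-triangular matrix, and conjugating by `Δ` and scaling by
`T^S` commute with inversion; this moves the powers of `T` out of the constant matrices
`E⁻¹`, `G⁻¹` and `-G⁻¹ F E⁻¹`.
-/

open Matrix

namespace Matrix

variable {n K : Type*} [Fintype n] [DecidableEq n] [Field K]

theorem of_mul_zpow_eq_smul_diagonal_mul_mul_diagonal {T : K} (hT : T ≠ 0) (ν : n → ℤ) (k : ℤ)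
    (M : Matrix n n K) {e : n → n → ℤ} (he : ∀ i j, e i j = k + ν j - ν i) :
    of (fun i j => M i j * T ^ e i j)
      = T ^ k • (diagonal (fun i => (T ^ ν i)⁻¹) * M * diagonal (fun j => T ^ ν j)) := by
  ext i j
  simp only [of_apply, smul_apply, mul_diagonal, diagonal_mul, smul_eq_mul, he, zpow_sub₀ hT,
    zpow_add₀ hT]
  ring

theorem diagonal_mul_diagonal_inv {d : n → K} (hd : ∀ i, d i ≠ 0) :
    diagonal d * diagonal (fun i => (d i)⁻¹) = 1 := by
  simp [diagonal_mul_diagonal, hd]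

theorem diagonal_inv_mul_diagonal {d : n → K} (hd : ∀ i, d i ≠ 0) :
    diagonal (fun i => (d i)⁻¹) * diagonal d = 1 := by
  simp [diagonal_mul_diagonal, hd]

theorem smul_conj_mul_smul_conj_inv_eq_one {P Q M : Matrix n n K} {c : K} (hc : c ≠ 0)
    (hQP : Q * P = 1) (hPQ : P * Q = 1) (hM : IsUnit M) :
    (c • (P * M * Q)) * (c⁻¹ • (P * M⁻¹ * Q)) = 1 := by
  have hMM : M * M⁻¹ = 1 := mul_nonsing_inv M ((isUnit_iff_isUnit_det M).mp hM)
  calc (c • (P * M * Q)) * (c⁻¹ • (P * M⁻¹ * Q))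
      = (c * c⁻¹) • (P * (M * (Q * P) * M⁻¹) * Q) := by
        simp only [smul_mul_smul_comm, Matrix.mul_assoc]
    _ = 1 := by rw [mul_inv_cancel₀ hc, hQP, Matrix.mul_one, hMM, Matrix.mul_one, hPQ, one_smul]

theorem neg_smul_conj_mul_conj_mul {P Q W F U : Matrix n n K} (c : K) (hQP : Q * P = 1)
    (hQU : Q * U = U * Q) :
    -(c • (P * W * Q) * (P * F * Q) * U) = c • (P * -(W * F * U) * Q) := by
  rw [smul_mul_assoc, smul_mul_assoc, ← smul_neg]
  congr 1
  calc -(P * W * Q * (P * F * Q) * U) = -(P * W * (Q * P) * F * (Q * U)) := by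
        simp only [Matrix.mul_assoc]
    _ = P * -(W * F * U) * Q := by
        rw [hQP, hQU]
        simp only [Matrix.mul_one, Matrix.mul_neg, Matrix.neg_mul, Matrix.mul_assoc]

end Matrix

theorem mapping_matrix_closed_form_inverse_general
    (S : ℕ) (E F G : Matrix (Fin S) (Fin S) ℝ)
    (hEdiag : E.IsDiag) (hE : IsUnit E) (hG : IsUnit G) (T : ℝ) (hT : 0 < T) :
    IsUnit
      (Matrix.fromBlocks E 0
        (Matrix.of fun i j : Fin S => F i j * T ^ (((j : ℕ) : ℤ) - ((i : ℕ) : ℤ)))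
        (Matrix.of fun i j : Fin S => G i j * T ^ ((S : ℤ) - ((i : ℕ) : ℤ) + ((j : ℕ) : ℤ)))) ∧
    (Matrix.fromBlocks E 0
        (Matrix.of fun i j : Fin S => F i j * T ^ (((j : ℕ) : ℤ) - ((i : ℕ) : ℤ)))
        (Matrix.of fun i j : Fin S => G i j * T ^ ((S : ℤ) - ((i : ℕ) : ℤ) + ((j : ℕ) : ℤ))))⁻¹
      = Matrix.fromBlocks E⁻¹ 0
        (Matrix.of fun i j : Fin S =>
          (-(G⁻¹ * F * E⁻¹)) i j * T ^ (((j : ℕ) : ℤ) - ((i : ℕ) : ℤ) - (S : ℤ)))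
        (Matrix.of fun i j : Fin S =>
          G⁻¹ i j * T ^ (((j : ℕ) : ℤ) - ((i : ℕ) : ℤ) - (S : ℤ))) := by
  have hT0 : T ≠ 0 := hT.ne'
  set ν : Fin S → ℤ := fun i => ((i : ℕ) : ℤ)
  set P := diagonal fun i => (T ^ ν i)⁻¹
  set Q := diagonal fun i => T ^ ν i
  have hPQ : P * Q = 1 := diagonal_inv_mul_diagonal fun _ => zpow_ne_zero _ hT0
  have hQP : Q * P = 1 := diagonal_mul_diagonal_inv fun _ => zpow_ne_zero _ hT0
  rw [of_mul_zpow_eq_smul_diagonal_mul_mul_diagonal hT0 ν 0 F fun _ _ => by ring,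
    of_mul_zpow_eq_smul_diagonal_mul_mul_diagonal hT0 ν S G fun _ _ => by ring,
    of_mul_zpow_eq_smul_diagonal_mul_mul_diagonal hT0 ν (-S) _ fun _ _ => by ring,
    of_mul_zpow_eq_smul_diagonal_mul_mul_diagonal hT0 ν (-S) G⁻¹ fun _ _ => by ring]
  have hGT : (T ^ (S : ℤ) • (P * G * Q)) * (T ^ (-S : ℤ) • (P * G⁻¹ * Q)) = 1 := by
    rw [_root_.zpow_neg]
    exact smul_conj_mul_smul_conj_inv_eq_one (zpow_ne_zero _ hT0) hQP hPQ hG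
  have hGT_unit : IsUnit (T ^ (S : ℤ) • (P * G * Q)) :=
    (isUnit_iff_isUnit_det _).mpr (isUnit_det_of_right_inverse hGT)
  have hQE : Q * E⁻¹ = E⁻¹ * Q := by
    rw [← hEdiag.diagonal_diag, inv_diagonal]
    exact (commute_diagonal _ _).eq
  refine ⟨isUnit_fromBlocks_zero₁₂.mpr ⟨hE, hGT_unit⟩, ?_⟩
  rw [inv_fromBlocks_zero₁₂_of_isUnit_iff _ _ _ (iff_of_true hE hGT_unit), inv_eq_right_inv hGT]
  congr 1
  rw [zpow_zero, one_smul]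
  exact neg_smul_conj_mul_conj_mul _ hQP hQE

/-- **Closed-form inverse of the boundary-condition mapping matrix `A(T)`.**
With `E` diagonal and invertible, `G` invertible, `T > 0`, the block matrix
`A(T) = [[E, 0], [(Fᵢⱼ T^{j−i}), (Gᵢⱼ T^{S−i+j})]]` is invertible with inverse
`[[U, 0], [(Vᵢⱼ T^{j−i−S}), (Wᵢⱼ T^{j−i−S})]]`, where `U = E⁻¹`, `W = G⁻¹`,
`V = −W F U`; in particular every entry of `A(T)⁻¹` is a constant times a power of `T`. -/
theorem mapping_matrix_closed_form_inverse
    (S : ℕ) (hS : 1 ≤ S) (E F G : Matrix (Fin S) (Fin S) ℝ)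
    (hEdiag : E.IsDiag) (hE : IsUnit E) (hG : IsUnit G) (T : ℝ) (hT : 0 < T) :
    IsUnit
      (Matrix.fromBlocks E 0
        (Matrix.of fun i j : Fin S => F i j * T ^ (((j : ℕ) : ℤ) - ((i : ℕ) : ℤ)))
        (Matrix.of fun i j : Fin S => G i j * T ^ ((S : ℤ) - ((i : ℕ) : ℤ) + ((j : ℕ) : ℤ)))) ∧
    (Matrix.fromBlocks E 0
        (Matrix.of fun i j : Fin S => F i j * T ^ (((j : ℕ) : ℤ) - ((i : ℕ) : ℤ)))
        (Matrix.of fun i j : Fin S => G i j * T ^ ((S : ℤ) - ((i : ℕ) : ℤ) + ((j : ℕ) : ℤ))))⁻¹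
      = Matrix.fromBlocks E⁻¹ 0
        (Matrix.of fun i j : Fin S =>
          (-(G⁻¹ * F * E⁻¹)) i j * T ^ (((j : ℕ) : ℤ) - ((i : ℕ) : ℤ) - (S : ℤ)))
        (Matrix.of fun i j : Fin S =>
          G⁻¹ i j * T ^ (((j : ℕ) : ℤ) - ((i : ℕ) : ℤ) - (S : ℤ))) :=
  mapping_matrix_closed_form_inverse_general S E F G hEdiag hE hG T hT
end

section
/- Let N ≥ 0, i ≥ 0 be integers and T > 0. Let c ∈ ℝ^{(N+1)×3} be a coefficient matrix and define the curve p : ℝ → ℝ³ by p(t) = cᵀ β(t) with β(t) = (1, t, t², …, t^N)ᵀ. Define Q_i(T) ∈ ℝ^{(N+1)×(N+1)} by (Q_i(T))_{jk} = (j!/(j−i)!)·(k!/(k−i)!)·T^{j+k−2i+1}/(j+k−2i+1) if j ≥ i and k ≥ i, and 0 otherwise (indices 0 ≤ j, k ≤ N), so that (Q_i(T))_{jk} = ∫₀^T β_j^{(i)}(t) β_k^{(i)}(t) dt. Then ∫₀^T ‖p^{(i)}(t)‖² dt = trace( cᵀ Q_i(T) c ), where ‖·‖ is the Euclidean norm on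 ℝ³. -/
/-!
Writing `w_j` for the rows of `c`, the curve is `p = ∑ⱼ βⱼ • w_j`, so `p⁽ⁱ⁾ = ∑ⱼ βⱼ⁽ⁱ⁾ • w_j`
and `‖p⁽ⁱ⁾‖² = ∑ⱼₖ βⱼ⁽ⁱ⁾ βₖ⁽ⁱ⁾ ⟪w_j, w_k⟫`. Integrating termwise replaces `βⱼ⁽ⁱ⁾ βₖ⁽ⁱ⁾` by `Q_jk`,
and `∑ⱼₖ Q_jk ⟪w_j, w_k⟫` is `trace (cᵀ Q c)`.
-/

open Matrix Finset

section Gram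

variable {ι E : Type*} [NormedAddCommGroup E] [InnerProductSpace ℝ E]

theorem norm_sq_sum_smul (s : Finset ι) (a : ι → ℝ) (w : ι → E) :
    ‖∑ j ∈ s, a j • w j‖ ^ 2 = ∑ j ∈ s, ∑ k ∈ s, a j * a k * inner ℝ (w j) (w k) := by
  rw [← real_inner_self_eq_norm_sq, sum_inner]
  refine sum_congr rfl fun j _ => ?_
  rw [inner_sum]
  refine sum_congr rfl fun k _ => ?_
  rw [real_inner_smul_left, real_inner_smul_right]
  ring

theorem intervalIntegral.integral_norm_sq_sum_smul {f : ι → ℝ → ℝ} {s : Finset ι}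
    (hf : ∀ j ∈ s, Continuous (f j)) (w : ι → E) (a b : ℝ) :
    ∫ t in a..b, ‖∑ j ∈ s, f j t • w j‖ ^ 2 =
      ∑ j ∈ s, ∑ k ∈ s, (∫ t in a..b, f j t * f k t) * inner ℝ (w j) (w k) := by
  have hcont : ∀ j ∈ s, ∀ k ∈ s,
      Continuous (fun t => f j t * f k t * inner ℝ (w j) (w k)) :=
    fun j hj k hk => ((hf j hj).mul (hf k hk)).mul continuous_const
  simp_rw [norm_sq_sum_smul]
  rw [integral_finsetSum fun j hj => ?_]
  · refine sum_congr rfl fun j hj => ?_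
    rw [integral_finsetSum fun k hk => (hcont j hj k hk).intervalIntegrable a b]
    exact sum_congr rfl fun k _ => integral_mul_const _ _
  · exact (continuous_finsetSum s fun k hk => hcont j hj k hk).intervalIntegrable a b

end Gram

theorem iteratedDeriv_sum_smul_const {ι 𝕜 E : Type*} [NontriviallyNormedField 𝕜]
    [NormedAddCommGroup E] [NormedSpace 𝕜 E] {f : ι → 𝕜 → 𝕜} {s : Finset ι} {n : ℕ} {x : 𝕜}
    (hf : ∀ j ∈ s, ContDiffAt 𝕜 n (f j) x) (w : ι → E) :
    iteratedDeriv n (fun t => ∑ j ∈ s, f j t • w j) x = ∑ j ∈ s, iteratedDeriv n (f j) x • w j := by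
  rw [iteratedDeriv_fun_sum (f := fun j t => f j t • w j)
    fun j hj => (hf j hj).smul contDiffAt_const]
  exact sum_congr rfl fun j hj => iteratedDeriv_smul_const (hf j hj) (w j)

theorem integral_iteratedDeriv_pow_mul_iteratedDeriv_pow (i j k : ℕ) (T : ℝ) :
    ∫ t in (0 : ℝ)..T, iteratedDeriv i (· ^ j) t * iteratedDeriv i (· ^ k) t =
      if i ≤ j ∧ i ≤ k then
        (j.descFactorial i : ℝ) * (k.descFactorial i : ℝ) * T ^ (j + k - 2 * i + 1) /
          ((j + k - 2 * i + 1 : ℕ) : ℝ)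
      else 0 := by
  split_ifs with h
  · have hexp : j + k - 2 * i = (j - i) + (k - i) := by omega
    simp_rw [iteratedDeriv_pow, hexp]
    calc _ = ∫ t in (0 : ℝ)..T,
            (j.descFactorial i : ℝ) * k.descFactorial i * t ^ (j - i + (k - i)) := by
          congr 1; ext t; ring
      _ = _ := by
          rw [intervalIntegral.integral_const_mul, integral_pow, zero_pow (Nat.succ_ne_zero _),
            sub_zero, Nat.cast_succ]
          ring
  · have hzero (t : ℝ) : iteratedDeriv i (· ^ j) t * iteratedDeriv i (· ^ k) t = 0 := by
      rcases not_and_or.mp h with h | h <;>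
        simp [Nat.descFactorial_eq_zero_iff_lt.mpr (not_le.mp h)]
    simp only [hzero, intervalIntegral.integral_zero]

theorem Matrix.trace_transpose_mul_mul {m n R : Type*} [Fintype m] [Fintype n] [CommSemiring R]
    (c : Matrix m n R) (Q : Matrix m m R) :
    (cᵀ * Q * c).trace = ∑ j, ∑ k, Q j k * (c j ⬝ᵥ c k) := by
  simp only [trace, diag_apply, mul_apply, transpose_apply, dotProduct, sum_mul, mul_sum]
  conv_rhs => rw [sum_comm]
  rw [sum_comm]
  refine sum_congr rfl fun k _ => ?_
  rw [sum_comm]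
  refine sum_congr rfl fun j _ => sum_congr rfl fun d _ => ?_
  ring

theorem derivative_energy_quadratic_form_general
    (N i : ℕ) (T : ℝ)
    (c : Matrix (Fin (N + 1)) (Fin 3) ℝ)
    (p : ℝ → EuclideanSpace ℝ (Fin 3))
    (hp : ∀ t : ℝ, ∀ d : Fin 3, p t d = ∑ j : Fin (N + 1), c j d * t ^ (j : ℕ))
    (Q : Matrix (Fin (N + 1)) (Fin (N + 1)) ℝ)
    (hQ : ∀ j k : Fin (N + 1), Q j k =
      if i ≤ (j : ℕ) ∧ i ≤ (k : ℕ) then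
        ((j : ℕ).descFactorial i : ℝ) * ((k : ℕ).descFactorial i : ℝ) *
          T ^ ((j : ℕ) + (k : ℕ) - 2 * i + 1) /
          (((j : ℕ) + (k : ℕ) - 2 * i + 1 : ℕ) : ℝ)
      else 0) :
    ∫ t in (0 : ℝ)..T, ‖iteratedDeriv i p t‖ ^ 2 = (cᵀ * Q * c).trace := by
  set w : Fin (N + 1) → EuclideanSpace ℝ (Fin 3) := fun j => WithLp.toLp 2 (c j)
  have hp_eq : p = fun t => ∑ j : Fin (N + 1), t ^ (j : ℕ) • w j := by
    ext t d
    simp [hp, w, mul_comm]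
  have hderiv (t : ℝ) :
      iteratedDeriv i p t = ∑ j : Fin (N + 1), iteratedDeriv i (· ^ (j : ℕ)) t • w j := by
    rw [hp_eq]
    exact iteratedDeriv_sum_smul_const (fun j _ => contDiffAt_id.pow _) w
  have hcont (j : Fin (N + 1)) : Continuous (iteratedDeriv i (· ^ (j : ℕ)) : ℝ → ℝ) :=
    (contDiff_id.pow _).continuous_iteratedDeriv i le_top
  simp_rw [hderiv, intervalIntegral.integral_norm_sq_sum_smul (fun j _ => hcont j),
    integral_iteratedDeriv_pow_mul_iteratedDeriv_pow, trace_transpose_mul_mul, hQ]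
  simp [w, EuclideanSpace.inner_toLp_toLp, dotProduct_comm]

/-- **Derivative energy as a quadratic form in the coefficients.**
For a polynomial curve `p(t) = cᵀ β(t)` in ℝ³ with `β(t) = (1, t, …, t^N)ᵀ` and the
symmetric cost matrix `Q_i(T)` with entries
`(Q_i(T))_{jk} = (j!/(j−i)!)(k!/(k−i)!) T^{j+k−2i+1}/(j+k−2i+1)` for `j, k ≥ i` (else `0`),
one has `∫₀ᵀ ‖p⁽ⁱ⁾(t)‖² dt = trace(cᵀ Q_i(T) c)`. -/
theorem derivative_energy_quadratic_form
    (N i : ℕ) (hi : i ≤ N) (T : ℝ) (hT : 0 < T)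
    (c : Matrix (Fin (N + 1)) (Fin 3) ℝ)
    (p : ℝ → EuclideanSpace ℝ (Fin 3))
    (hp : ∀ t : ℝ, ∀ d : Fin 3, p t d = ∑ j : Fin (N + 1), c j d * t ^ (j : ℕ))
    (Q : Matrix (Fin (N + 1)) (Fin (N + 1)) ℝ)
    (hQ : ∀ j k : Fin (N + 1), Q j k =
      if i ≤ (j : ℕ) ∧ i ≤ (k : ℕ) then
        ((j : ℕ).descFactorial i : ℝ) * ((k : ℕ).descFactorial i : ℝ) *
          T ^ ((j : ℕ) + (k : ℕ) - 2 * i + 1) /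
          (((j : ℕ) + (k : ℕ) - 2 * i + 1 : ℕ) : ℝ)
      else 0) :
    ∫ t in (0 : ℝ)..T, ‖iteratedDeriv i p t‖ ^ 2 = (cᵀ * Q * c).trace :=
  derivative_energy_quadratic_form_general N i T c p hp Q hQ
end
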